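/- For every nonnegative integer n, Σ_{k=0}^{n} (q^{-n};q)_k (q^{n+2};q)_k q^k = (-1)^{n+1} q^{3n²/2 + 7n/2 + 1} / (1 - q^{n+1}) · Σ_{j=-n-1}^{n} (-1)^j q^{-j(3j+1)/2}, as an identity of rational functions in q (all exponents appearing are integers). -/

import Mathlib

/-!
Write `M n` for the left-hand side multiplied by `1 - q^(n+1)`, a Laurent polynomial in `q`.
A creative-telescoping certificate in the summation index shows
`M (n+1) = q^(n+1) - q^(3n+4) - q^(3n+5) M n`, and the pentagonal sum on the right satisfies the
same recurrence: passing from `n` to `n+1` adds the two terms `j = n+1` and `j = -n-2`, whose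
exponents `3n+4` and `n+1` are read off from differences of pentagonal numbers.
-/

/-- Finite q-Pochhammer symbol `(a;q)_n`. -/
noncomputable def qp (a q : ℂ) (n : ℕ) : ℂ := ∏ k ∈ Finset.range n, (1 - a * q ^ k)

open Finset

lemma qp_zero (a q : ℂ) : qp a q 0 = 1 := prod_range_zero _

lemma qp_succ (a q : ℂ) (n : ℕ) : qp a q (n + 1) = qp a q n * (1 - a * q ^ n) :=
  prod_range_succ _ _

lemma qp_succ' (a q : ℂ) (n : ℕ) : qp a q (n + 1) = (1 - a) * qp (a * q) q n := by
  simp only [qp, prod_range_succ', pow_zero, mul_one, pow_succ', mul_assoc]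
  rw [mul_comm]

lemma qp_inv_pow_succ_eq_zero {q : ℂ} (hq : q ≠ 0) (n : ℕ) : qp (q ^ n)⁻¹ q (n + 1) = 0 :=
  prod_eq_zero (self_mem_range_succ n) (by rw [inv_mul_cancel₀ (pow_ne_zero n hq), sub_self])

lemma natCast_pentagonal_neg_eq_add (k : ℤ) : (pentagonal (-k) : ℤ) = pentagonal k + k := by
  linarith [two_mul_natCast_pentagonal k, two_mul_natCast_pentagonal_neg k]

lemma natCast_pentagonal_neg_add_one (k : ℤ) :
    (pentagonal (-(k + 1)) : ℤ) = pentagonal (-k) + 3 * k + 2 := by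
  linarith [two_mul_natCast_pentagonal_neg k, two_mul_natCast_pentagonal_neg (k + 1)]

lemma Int.sum_Icc_sub_one_add_one {M : Type*} [AddCommMonoid M] (f : ℤ → M) {a b : ℤ}
    (h : a ≤ b + 1) :
    ∑ j ∈ Icc (a - 1) (b + 1), f j = f (a - 1) + f (b + 1) + ∑ j ∈ Icc a b, f j := by
  rw [← insert_Icc_left_eq_Icc_sub_one (by omega), sum_insert (by simp),
    ← insert_Icc_right_eq_Icc_add_one h, sum_insert (by simp), add_assoc]

section
variable (q : ℂ)

noncomputable def summand (n k : ℕ) : ℂ := qp (q ^ n)⁻¹ q k * qp (q ^ (n + 2)) q k * q ^ k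

noncomputable def scaledSum (n : ℕ) : ℂ := (1 - q ^ (n + 1)) * ∑ k ∈ range (n + 1), summand q n k

-- The q-Zeilberger certificate for the recurrence `scaledSum_succ`.
noncomputable def certificate (n k : ℕ) : ℂ :=
  (1 - q ^ (n + 1) - q ^ (2 * n + 3) + q ^ (3 * n + 4) + (q ^ (2 * n + 3) - q ^ (n + 2)) * q ^ k) *
    qp (q ^ n)⁻¹ q k * qp (q ^ (n + 2)) q k

variable {q}

lemma one_sub_mul_summand_succ_succ (hq : q ≠ 0) (n k : ℕ) :
    (1 - q ^ (n + 2)) * summand q (n + 1) (k + 1) =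
      certificate q n (k + 1) - certificate q n k -
        q ^ (3 * n + 5) * (1 - q ^ (n + 1)) * summand q n k := by
  have hU : qp (q ^ (n + 1))⁻¹ q (k + 1) = (1 - (q ^ (n + 1))⁻¹) * qp (q ^ n)⁻¹ q k := by
    rw [qp_succ', pow_succ, mul_inv, inv_mul_cancel_right₀ hq]
  have hV : (1 - q ^ (n + 2)) * qp (q ^ (n + 3)) q (k + 1) =
      qp (q ^ (n + 2)) q k * (1 - q ^ (n + 2) * q ^ k) * (1 - q ^ (n + 2) * q ^ (k + 1)) := by
    rw [show n + 3 = n + 2 + 1 from rfl, pow_succ q (n + 2), ← qp_succ', qp_succ, qp_succ]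
  calc (1 - q ^ (n + 2)) * summand q (n + 1) (k + 1)
      = (1 - (q ^ (n + 1))⁻¹) * qp (q ^ n)⁻¹ q k * q ^ (k + 1) *
          ((1 - q ^ (n + 2)) * qp (q ^ (n + 3)) q (k + 1)) := by
        rw [summand, hU]; ring
    _ = _ := by
        rw [hV, certificate, certificate, summand, qp_succ, qp_succ]
        field_simp
        ring

lemma scaledSum_succ (hq : q ≠ 0) (n : ℕ) :
    scaledSum q (n + 1) = q ^ (n + 1) - q ^ (3 * n + 4) - q ^ (3 * n + 5) * scaledSum q n := by
  have htop : certificate q n (n + 1) = 0 := by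
    rw [certificate, qp_inv_pow_succ_eq_zero hq, mul_zero, zero_mul]
  have hbot : certificate q n 0 = 1 - q ^ (n + 1) - q ^ (n + 2) + q ^ (3 * n + 4) := by
    rw [certificate, qp_zero, qp_zero]; ring
  have hsum : (1 - q ^ (n + 2)) * ∑ k ∈ range (n + 1), summand q (n + 1) (k + 1) =
      certificate q n (n + 1) - certificate q n 0 - q ^ (3 * n + 5) * scaledSum q n := by
    rw [mul_sum, sum_congr rfl fun k _ => one_sub_mul_summand_succ_succ hq n k, sum_sub_distrib,
      sum_range_sub, scaledSum, mul_sum, mul_sum]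
    simp only [mul_assoc]
  rw [scaledSum, sum_range_succ', mul_add, hsum, htop, hbot, summand, qp_zero, qp_zero]
  ring

end

noncomputable def pentagonalSum (q : ℂ) (n : ℕ) : ℂ :=
  (-1) ^ (n + 1) * q ^ ((pentagonal (-((n : ℤ) + 1)) : ℤ) - 1) *
    ∑ j ∈ Icc (-(n : ℤ) - 1) n, (-1) ^ j * q ^ (-(pentagonal (-j) : ℤ))

lemma pentagonalSum_zero {q : ℂ} (hq : q ≠ 0) : pentagonalSum q 0 = 1 - q := by
  rw [pentagonalSum, show Icc (-((0 : ℕ) : ℤ) - 1) ((0 : ℕ) : ℤ) = {-1, 0} by rfl]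
  norm_num [pentagonal, mul_add, mul_inv_cancel₀ hq, ← sub_eq_add_neg]

lemma pentagonalSum_succ {q : ℂ} (hq : q ≠ 0) (n : ℕ) :
    pentagonalSum q (n + 1) =
      q ^ (n + 1) - q ^ (3 * n + 4) - q ^ (3 * n + 5) * pentagonalSum q n := by
  set P : ℤ := (pentagonal (-((n : ℤ) + 1)) : ℤ) with hPdef
  set S := ∑ j ∈ Icc (-(n : ℤ) - 1) n, (-1 : ℂ) ^ j * q ^ (-(pentagonal (-j) : ℤ))
  have hP : (pentagonal (-((n : ℤ) + 1 + 1)) : ℤ) = P + 3 * n + 5 := by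
    rw [natCast_pentagonal_neg_add_one]; ring
  have hP' : (pentagonal ((n : ℤ) + 1 + 1) : ℤ) = P + 2 * n + 3 := by
    linarith [natCast_pentagonal_neg_eq_add ((n : ℤ) + 1 + 1)]
  have hIcc : Icc (-((n + 1 : ℕ) : ℤ) - 1) ((n + 1 : ℕ) : ℤ) = Icc (-(n : ℤ) - 1 - 1) (n + 1) := by
    push_cast; ring_nf
  rw [pentagonalSum, pentagonalSum, hIcc, Int.sum_Icc_sub_one_add_one _ (by omega)]
  push_cast
  rw [hP, ← hPdef, show -(-(n : ℤ) - 1 - 1) = n + 1 + 1 by ring, hP']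
  have hpow : q ^ (P + 3 * n + 5 - 1) = q ^ (3 * n + 5) * q ^ (P - 1) := by
    rw [← zpow_natCast, ← zpow_add₀ hq]; push_cast; ring_nf
  have hj₁ : q ^ (P + 3 * n + 5 - 1) * ((-1) ^ ((n : ℤ) + 1) * q ^ (-P)) =
      (-1) ^ (n + 1) * q ^ (3 * n + 4) := by
    rw [mul_left_comm, ← zpow_add₀ hq, show P + 3 * n + 5 - 1 + -P = ((3 * n + 4 : ℕ) : ℤ) by
      push_cast; ring, zpow_natCast, show (n : ℤ) + 1 = ((n + 1 : ℕ) : ℤ) by push_cast; ring,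
      zpow_natCast]
  have hj₂ : q ^ (P + 3 * n + 5 - 1) * ((-1) ^ (-(n : ℤ) - 1 - 1) * q ^ (-(P + 2 * n + 3))) =
      -(-1) ^ (n + 1) * q ^ (n + 1) := by
    rw [mul_left_comm, ← zpow_add₀ hq, show P + 3 * n + 5 - 1 + -(P + 2 * n + 3) =
      ((n + 1 : ℕ) : ℤ) by push_cast; ring, zpow_natCast, show -(n : ℤ) - 1 - 1 =
      -((n + 2 : ℕ) : ℤ) by push_cast; ring, zpow_neg, ← inv_zpow, inv_neg_one, zpow_natCast]
    ring
  have hε : ((-1 : ℂ) ^ (n + 1)) ^ 2 = 1 := by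
    rw [← pow_mul]; exact Even.neg_one_pow ⟨n + 1, by ring⟩
  linear_combination (-1 : ℂ) ^ (n + 1 + 1) * (hj₂ + hj₁ + S * hpow) +
    (q ^ (n + 1) - q ^ (3 * n + 4)) * hε

lemma scaledSum_eq_pentagonalSum {q : ℂ} (hq : q ≠ 0) (n : ℕ) :
    scaledSum q n = pentagonalSum q n := by
  induction n with
  | zero => simp [scaledSum, summand, qp_zero, pentagonalSum_zero hq]
  | succ n ih => rw [scaledSum_succ hq, pentagonalSum_succ hq, ih]

lemma one_sub_pow_ne_zero_of_norm_lt_one {𝕜 : Type*} [NormedDivisionRing 𝕜] {q : 𝕜}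
    (hq : ‖q‖ < 1) {n : ℕ} (hn : n ≠ 0) : 1 - q ^ n ≠ 0 := by
  refine sub_ne_zero.2 fun h => ?_
  have := pow_lt_one₀ (norm_nonneg q) hq hn
  rw [← norm_pow, ← h, norm_one] at this
  exact lt_irrefl 1 this

/-- `Σ_{k=0}^n (q^{-n};q)_k (q^{n+2};q)_k q^k
      = (-1)^{n+1} q^{3n²/2+7n/2+1}/(1-q^{n+1}) · Σ_{j=-n-1}^n (-1)^j q^{-j(3j+1)/2}`,
    as an identity of rational functions (stated for all `q` with `0 < |q| < 1`). -/
theorem stmt12 (n : ℕ) (q : ℂ) (hq : ‖q‖ < 1) (hq0 : q ≠ 0) :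
    ∑ k ∈ Finset.range (n + 1),
        qp (q ^ (-(n : ℤ))) q k * qp (q ^ (n + 2)) q k * q ^ k =
      (-1 : ℂ) ^ (n + 1) * q ^ ((n : ℤ) * (3 * n + 7) / 2 + 1) / (1 - q ^ (n + 1)) *
        ∑ j ∈ Finset.Icc (-(n : ℤ) - 1) (n : ℤ),
          (-1 : ℂ) ^ j * q ^ (-(j * (3 * j + 1) / 2)) := by
  have hne : 1 - q ^ (n + 1) ≠ 0 := one_sub_pow_ne_zero_of_norm_lt_one hq n.succ_ne_zero
  have hexp : (n : ℤ) * (3 * n + 7) / 2 + 1 = (pentagonal (-((n : ℤ) + 1)) : ℤ) - 1 := by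
    have := two_mul_natCast_pentagonal_neg ((n : ℤ) + 1)
    rw [show ((n : ℤ) + 1) * (3 * ((n : ℤ) + 1) + 1) = n * (3 * n + 7) + 4 by ring] at this
    omega
  have hpent (j : ℤ) : j * (3 * j + 1) / 2 = pentagonal (-j) := by
    rw [natCast_pentagonal]; ring_nf
  rw [div_mul_eq_mul_div, eq_div_iff hne, hexp, mul_comm, zpow_neg, zpow_natCast]
  simp only [hpent]
  exact scaledSum_eq_pentagonalSum hq0 n
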